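/- Let g ≥ 2 be an integer and set α = g + √(g² − 1). Let d, K, C > 0 be real numbers and k a natural number. Let z, zp, h2 : ℕ → ℝ and f0 : ℕ → ℝ be sequences with z n ≥ 0 for all n, and suppose: (i) there exists N₁ such that for all n ≥ N₁, d · αⁿ/n ≤ z n ≤ K · αⁿ/n; (ii) 0 ≤ zp n ≤ z n for all n, and zp n = z n / 2 for all odd n; (iii) 0 ≤ h2 n ≤ C · n^k · gⁿ for all n; (iv) 0 ≤ f0 N ≤ C · g^N for all N. Then (Σ_{n=1}^N z n − f0 N) − Σ_{n=1}^N (h2 n + z n − zp n) → ∞ as N → ∞. -/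

import Mathlib

/-!
The quantity equals `∑ zp - ∑ h2 - f0 N`. The largest odd `m ≤ N` alone gives
`∑ zp ≥ zp m = z m / 2 ≥ (d / 2α) · αᴺ / N`, while `∑ h2 + f0 N = O(N^(k+1) gᴺ)`, which is
`o(αᴺ / N)` because `g < α = g + √(g² - 1)`.
-/

open Filter Finset Asymptotics

theorem tendsto_sub_atTop_of_isLittleO {α : Type*} {l : Filter α} {u v : α → ℝ}
    (hu : Tendsto u l atTop) (hv : v =o[l] u) : Tendsto (fun x => u x - v x) l atTop := by
  have : (fun x => u x - v x) ~[l] u := by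
    refine IsLittleO.isEquivalent ?_
    simpa [Pi.sub_def] using hv.neg_left
  exact this.symm.tendsto_atTop hu

theorem isLittleO_pow_mul_pow_div (j : ℕ) {r₁ r₂ : ℝ} (h0 : 0 ≤ r₁) (h : r₁ < r₂) :
    (fun n : ℕ => (n : ℝ) ^ j * r₁ ^ n) =o[atTop] fun n => r₂ ^ n / n := by
  have := (isLittleO_pow_const_mul_const_pow_const_pow_of_norm_lt (j + 1)
    (by rwa [Real.norm_of_nonneg h0])).mul_isBigO (isBigO_refl (fun n : ℕ => (n : ℝ)⁻¹) atTop)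
  refine this.congr' ?_ (by simp [div_eq_mul_inv])
  filter_upwards [eventually_ne_atTop 0] with n hn
  field_simp
  ring

theorem tendsto_pow_div_natCast_atTop {r : ℝ} (hr : 1 < r) :
    Tendsto (fun n : ℕ => r ^ n / n) atTop atTop := by
  have h := isLittleO_pow_mul_pow_div 0 zero_le_one hr
  simp only [pow_zero, one_pow, mul_one] at h
  simpa [abs_of_pos (zero_lt_one.trans hr)] using (isLittleO_one_left_iff ℝ).1 h

theorem lt_add_sqrt_sq_sub_one {x : ℝ} (hx : 1 < x) : x < x + √(x ^ 2 - 1) := by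
  have : 0 < x ^ 2 - 1 := by nlinarith
  simpa using Real.sqrt_pos.2 this

theorem exists_odd_le_le_succ {N : ℕ} (hN : 1 ≤ N) : ∃ m, Odd m ∧ m ≤ N ∧ N ≤ m + 1 :=
  ⟨2 * ((N - 1) / 2) + 1, odd_two_mul_add_one _, by omega, by omega⟩

theorem eventually_le_sum_Icc_of_odd {u : ℕ → ℝ} (hu : ∀ n, 0 ≤ u n) {c r : ℝ} (hc : 0 ≤ c)
    (hr : 1 ≤ r) (h : ∀ᶠ n in atTop, Odd n → c * (r ^ n / n) ≤ u n) :
    ∀ᶠ N in atTop, c / r * (r ^ N / N) ≤ ∑ n ∈ Icc 1 N, u n := by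
  obtain ⟨N₁, hN₁⟩ := eventually_atTop.1 h
  filter_upwards [eventually_ge_atTop (N₁ + 1)] with N hN
  obtain ⟨m, hm, hmN, hNm⟩ := exists_odd_le_le_succ (by omega : 1 ≤ N)
  have hpow : c / r * r ^ N ≤ c * r ^ m :=
    calc c / r * r ^ N ≤ c / r * r ^ (m + 1) := by gcongr
      _ = c * r ^ m := by field_simp; ring
  calc c / r * (r ^ N / N) = c / r * r ^ N / N := by ring
    _ ≤ c * r ^ m / m :=
        div_le_div₀ (by positivity) hpow (by exact_mod_cast hm.pos) (by exact_mod_cast hmN)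
    _ = c * (r ^ m / m) := by ring
    _ ≤ u m := hN₁ m (by omega) hm
    _ ≤ ∑ n ∈ Icc 1 N, u n := single_le_sum (fun n _ => hu n) (mem_Icc.2 ⟨hm.pos, hmN⟩)

theorem sum_Icc_le_mul_pow {u : ℕ → ℝ} {C r : ℝ} (k : ℕ) (hC : 0 ≤ C) (hr : 1 ≤ r)
    (h : ∀ n : ℕ, u n ≤ C * (n : ℝ) ^ k * r ^ n) (N : ℕ) :
    ∑ n ∈ Icc 1 N, u n ≤ C * ((N : ℝ) ^ (k + 1) * r ^ N) :=
  calc ∑ n ∈ Icc 1 N, u n ≤ ∑ _n ∈ Icc 1 N, C * (N : ℝ) ^ k * r ^ N :=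
        sum_le_sum fun n hn => (h n).trans <| by
          obtain ⟨-, hnN⟩ := mem_Icc.1 hn
          gcongr
    _ = C * ((N : ℝ) ^ (k + 1) * r ^ N) := by
      simp only [sum_const, Nat.card_Icc, add_tsub_cancel_right, nsmul_eq_mul]; ring

theorem stmt_13_general (g : ℕ) (hg : 2 ≤ g) (α : ℝ)
    (hα : α = (g : ℝ) + Real.sqrt ((g : ℝ) ^ 2 - 1))
    (d K C : ℝ) (hd : 0 < d) (hC : 0 < C) (k : ℕ)
    (z zp h2 f0 : ℕ → ℝ)
    (hz_growth : ∃ N₁ : ℕ, ∀ n : ℕ, N₁ ≤ n →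
      d * α ^ n / (n : ℝ) ≤ z n ∧ z n ≤ K * α ^ n / (n : ℝ))
    (hzp_nonneg : ∀ n : ℕ, 0 ≤ zp n)
    (hzp_odd : ∀ n : ℕ, Odd n → zp n = z n / 2)
    (hh2_ub : ∀ n : ℕ, h2 n ≤ C * (n : ℝ) ^ k * (g : ℝ) ^ n)
    (hf0_ub : ∀ N : ℕ, f0 N ≤ C * (g : ℝ) ^ N) :
    Tendsto
      (fun N : ℕ => ((∑ n ∈ Finset.Icc 1 N, z n) - f0 N)
        - ∑ n ∈ Finset.Icc 1 N, (h2 n + z n - zp n))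
      atTop atTop := by
  obtain ⟨N₁, hN₁⟩ := hz_growth
  have hg1 : (1 : ℝ) < g := by exact_mod_cast hg
  have hgα : (g : ℝ) < α := hα ▸ lt_add_sqrt_sq_sub_one hg1
  have hα1 : 1 < α := hg1.trans hgα
  have hzp_sum : ∀ᶠ N in atTop, d / 2 / α * (α ^ N / N) ≤ ∑ n ∈ Icc 1 N, zp n := by
    refine eventually_le_sum_Icc_of_odd hzp_nonneg (by positivity) hα1.le ?_
    filter_upwards [eventually_ge_atTop N₁] with n hn hodd
    have := (hN₁ n hn).1
    rw [hzp_odd n hodd]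
    linarith [mul_div_assoc d (α ^ n) n]
  have herror : (fun N : ℕ => C * ((N : ℝ) ^ (k + 1) * (g : ℝ) ^ N) + C * (g : ℝ) ^ N) =o[atTop]
      fun N : ℕ => d / 2 / α * (α ^ N / N) :=
    (((isLittleO_pow_mul_pow_div (k + 1) (by positivity) hgα).const_mul_left C).add
      (by simpa using (isLittleO_pow_mul_pow_div 0 (by positivity) hgα).const_mul_left C)
      ).const_mul_right' (by positivity : (0 : ℝ) < d / 2 / α).ne'.isUnit
  refine tendsto_atTop_mono' _ ?_ <| tendsto_sub_atTop_of_isLittleO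
    ((tendsto_pow_div_natCast_atTop hα1).const_mul_atTop (by positivity)) herror
  filter_upwards [hzp_sum] with N hN
  have := sum_Icc_le_mul_pow k hC.le hg1.le hh2_ub N
  have := hf0_ub N
  simp only [sum_sub_distrib, sum_add_distrib]
  linarith

/-- Quantitative skeleton of Lemma 5.1, case (1) for a compact hyperbolic
curve of genus `g`: `z n` grows like `αⁿ/n` with `α = g + √(g² − 1)`, the
fixed parts are half for odd `n`, and the `H²` and `F⁰` contributions are
`O(n^k gⁿ)` and `O(g^N)` respectively. -/
theorem stmt_13 (g : ℕ) (hg : 2 ≤ g) (α : ℝ)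
    (hα : α = (g : ℝ) + Real.sqrt ((g : ℝ) ^ 2 - 1))
    (d K C : ℝ) (hd : 0 < d) (hK : 0 < K) (hC : 0 < C) (k : ℕ)
    (z zp h2 f0 : ℕ → ℝ)
    (hz_nonneg : ∀ n : ℕ, 0 ≤ z n)
    (hz_growth : ∃ N₁ : ℕ, ∀ n : ℕ, N₁ ≤ n →
      d * α ^ n / (n : ℝ) ≤ z n ∧ z n ≤ K * α ^ n / (n : ℝ))
    (hzp_nonneg : ∀ n : ℕ, 0 ≤ zp n)
    (hzp_le : ∀ n : ℕ, zp n ≤ z n)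
    (hzp_odd : ∀ n : ℕ, Odd n → zp n = z n / 2)
    (hh2_nonneg : ∀ n : ℕ, 0 ≤ h2 n)
    (hh2_ub : ∀ n : ℕ, h2 n ≤ C * (n : ℝ) ^ k * (g : ℝ) ^ n)
    (hf0_nonneg : ∀ N : ℕ, 0 ≤ f0 N)
    (hf0_ub : ∀ N : ℕ, f0 N ≤ C * (g : ℝ) ^ N) :
    Tendsto
      (fun N : ℕ => ((∑ n ∈ Finset.Icc 1 N, z n) - f0 N)
        - ∑ n ∈ Finset.Icc 1 N, (h2 n + z n - zp n))
      atTop atTop :=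
  stmt_13_general g hg α hα d K C hd hC k z zp h2 f0 hz_growth hzp_nonneg hzp_odd hh2_ub hf0_ub
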